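/- If a twice continuously differentiable function R : {(t,s) : t > s > 0} → ℝ satisfies X_0 R = 0 and X_1 R = 0, where X_0 = −t∂_t − s∂_s − (x_1+x_2)/2 and X_1 = −t²∂_t − s²∂_s − x_1 t − x_2 s, then there exists a constant c with R(t,s) = c (t/s)^{(x_2−x_1)/2} (t−s)^{−(x_1+x_2)/2} for all t > s > 0. -/

import Mathlib

noncomputable def pt (R : ℝ → ℝ → ℝ) : ℝ → ℝ → ℝ := fun t s => deriv (fun u => R u s) t
noncomputable def ps (R : ℝ → ℝ → ℝ) : ℝ → ℝ → ℝ := fun t s => deriv (fun u => R t u) s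

private lemma eq_of_deriv_zero_aux {f : ℝ → ℝ} {p q : ℝ} (hpq : p ≤ q)
    (h : ∀ x ∈ Set.Icc p q, HasDerivAt f 0 x) : f q = f p := by
  have hcont : ContinuousOn f (Set.Icc p q) := fun x hx =>
    (h x hx).continuousAt.continuousWithinAt
  exact constant_of_has_deriv_right_zero hcont
    (fun x hx => ((h x (Set.Ico_subset_Icc_self hx)).hasDerivWithinAt))
    q (Set.right_mem_Icc.mpr hpq)

private lemma eq_of_deriv_zero {f : ℝ → ℝ} (p q : ℝ)
    (h : ∀ x, min p q ≤ x → x ≤ max p q → HasDerivAt f 0 x) : f p = f q := by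
  rcases le_total p q with hpq | hpq
  · refine (eq_of_deriv_zero_aux hpq fun x hx => ?_).symm
    exact h x (by rw [min_eq_left hpq]; exact hx.1) (by rw [max_eq_right hpq]; exact hx.2)
  · refine eq_of_deriv_zero_aux hpq fun x hx => ?_
    exact h x (by rw [min_eq_right hpq]; exact hx.1) (by rw [max_eq_left hpq]; exact hx.2)

/-- If a C² function `R(t,s)` on `{t > s > 0}` satisfies `X₀R = 0` and `X₁R = 0`, where
`X₀ = -t∂_t - s∂_s - (x₁+x₂)/2` and `X₁ = -t²∂_t - s²∂_s - x₁t - x₂s`, then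
`R(t,s) = c (t/s)^((x₂-x₁)/2) (t-s)^(-(x₁+x₂)/2)` for some constant `c`. -/
theorem autoresponse_from_local_scale_invariance (x₁ x₂ : ℝ) (R : ℝ → ℝ → ℝ)
    (hR : ContDiffOn ℝ 2 (Function.uncurry R) {p : ℝ × ℝ | p.2 < p.1 ∧ 0 < p.2})
    (hX0 : ∀ t s : ℝ, s < t → 0 < s →
      -t * pt R t s - s * ps R t s - ((x₁ + x₂)/2) * R t s = 0)
    (hX1 : ∀ t s : ℝ, s < t → 0 < s →
      -t^2 * pt R t s - s^2 * ps R t s - x₁ * t * R t s - x₂ * s * R t s = 0) :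
    ∃ c : ℝ, ∀ t s : ℝ, s < t → 0 < s →
      R t s = c * (t/s) ^ ((x₂ - x₁)/2) * (t - s) ^ (-(x₁ + x₂)/2) := by
  have hU : IsOpen {p : ℝ × ℝ | p.2 < p.1 ∧ 0 < p.2} :=
    (isOpen_lt continuous_snd continuous_fst).and (isOpen_lt continuous_const continuous_snd)
  have hdiff : ∀ t s : ℝ, s < t → 0 < s → DifferentiableAt ℝ (Function.uncurry R) (t, s) := by
    intro t s hts hs
    exact (hR.differentiableOn two_ne_zero).differentiableAt (hU.mem_nhds ⟨hts, hs⟩)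
  have hRt : ∀ t s : ℝ, s < t → 0 < s → HasDerivAt (fun u => R u s) (pt R t s) t := by
    intro t s hts hs
    have h : DifferentiableAt ℝ (fun u => Function.uncurry R (u, s)) t :=
      by have := (hdiff t s hts hs).comp t (DifferentiableAt.prodMk (differentiableAt_id : DifferentiableAt ℝ (id : ℝ → ℝ) t) (differentiableAt_const s)); exact this
    exact h.hasDerivAt
  have hRs : ∀ t s : ℝ, s < t → 0 < s → HasDerivAt (fun v => R t v) (ps R t s) s := by
    intro t s hts hs
    have h : DifferentiableAt ℝ (fun v => Function.uncurry R (t, v)) s :=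
      (hdiff t s hts hs).comp s (DifferentiableAt.prodMk (differentiableAt_const t) differentiableAt_id)
    exact h.hasDerivAt
  -- solve the linear system for the partial derivatives
  have hpt' : ∀ t s : ℝ, s < t → 0 < s →
      pt R t s = R t s * ((x₂ - x₁)/2 / t + (-(x₁ + x₂)/2) / (t - s)) := by
    intro t s hts hs
    have ht : (0:ℝ) < t := hs.trans hts
    have hts0 : (0:ℝ) < t - s := sub_pos.mpr hts
    have h1 := hX0 t s hts hs
    have h2 := hX1 t s hts hs
    field_simp [ht.ne', hts0.ne']
    linear_combination (2*s) * h1 - 2 * h2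
  have hps' : ∀ t s : ℝ, s < t → 0 < s →
      ps R t s = R t s * (-((x₂ - x₁)/2 / s) - (-(x₁ + x₂)/2) / (t - s)) := by
    intro t s hts hs
    have ht : (0:ℝ) < t := hs.trans hts
    have hts0 : (0:ℝ) < t - s := sub_pos.mpr hts
    have h1 := hX0 t s hts hs
    have h2 := hX1 t s hts hs
    field_simp [hs.ne', hts0.ne']
    linear_combination (-2*t) * h1 + 2 * h2
  -- derivative of the quotient in the first variable is zero
  have hGt : ∀ t s : ℝ, s < t → 0 < s →
      HasDerivAt (fun u => R u s / ((u/s) ^ ((x₂ - x₁)/2) * (u - s) ^ (-(x₁ + x₂)/2))) 0 t := by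
    intro t s hts hs
    have ht : (0:ℝ) < t := hs.trans hts
    have hts0 : (0:ℝ) < t - s := sub_pos.mpr hts
    have hq : (0:ℝ) < t / s := div_pos ht hs
    have h1 : HasDerivAt (fun u : ℝ => (u/s) ^ ((x₂ - x₁)/2))
        (1/s * ((x₂ - x₁)/2) * (t/s) ^ ((x₂ - x₁)/2 - 1)) t :=
      ((hasDerivAt_id t).div_const s).rpow_const (Or.inl hq.ne')
    have h2 : HasDerivAt (fun u : ℝ => (u - s) ^ (-(x₁ + x₂)/2))
        (1 * (-(x₁ + x₂)/2) * (t - s) ^ (-(x₁ + x₂)/2 - 1)) t :=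
      ((hasDerivAt_id t).sub_const s).rpow_const (Or.inl hts0.ne')
    have hN := h1.mul h2
    have hNne : (t/s) ^ ((x₂ - x₁)/2) * (t - s) ^ (-(x₁ + x₂)/2) ≠ 0 := by positivity
    have hG := (hRt t s hts hs).div hN hNne
    convert hG using 1
    case e'_4 => rfl
    case e'_5 => rfl
    case e'_8 => rfl
    symm
    rw [div_eq_zero_iff]
    left
    have hP : (t/s) ^ ((x₂ - x₁)/2) ≠ 0 := by positivity
    have hQ : (t - s) ^ (-(x₁ + x₂)/2) ≠ 0 := by positivity
    rw [hpt' t s hts hs, Real.rpow_sub_one hq.ne' ((x₂ - x₁)/2),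
      Real.rpow_sub_one hts0.ne' (-(x₁ + x₂)/2)]
    simp only [Pi.mul_apply]
    field_simp
    ring
  -- derivative of the quotient in the second variable is zero
  have hGs : ∀ t s : ℝ, s < t → 0 < s →
      HasDerivAt (fun v => R t v / ((t/v) ^ ((x₂ - x₁)/2) * (t - v) ^ (-(x₁ + x₂)/2))) 0 s := by
    intro t s hts hs
    have ht : (0:ℝ) < t := hs.trans hts
    have hts0 : (0:ℝ) < t - s := sub_pos.mpr hts
    have hq : (0:ℝ) < t / s := div_pos ht hs
    have h0 : HasDerivAt (fun v : ℝ => t / v) ((0 * s - t * 1) / s ^ 2) s :=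
      (hasDerivAt_const s t).div (hasDerivAt_id s) hs.ne'
    have h1 : HasDerivAt (fun v : ℝ => (t/v) ^ ((x₂ - x₁)/2))
        ((0 * s - t * 1) / s ^ 2 * ((x₂ - x₁)/2) * (t/s) ^ ((x₂ - x₁)/2 - 1)) s :=
      h0.rpow_const (Or.inl hq.ne')
    have h2 : HasDerivAt (fun v : ℝ => (t - v) ^ (-(x₁ + x₂)/2))
        (-1 * (-(x₁ + x₂)/2) * (t - s) ^ (-(x₁ + x₂)/2 - 1)) s :=
      ((hasDerivAt_id s).const_sub t).rpow_const (Or.inl hts0.ne')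
    have hN := h1.mul h2
    have hNne : (t/s) ^ ((x₂ - x₁)/2) * (t - s) ^ (-(x₁ + x₂)/2) ≠ 0 := by positivity
    have hG := (hRs t s hts hs).div hN hNne
    convert hG using 1
    case e'_4 => rfl
    case e'_5 => rfl
    case e'_8 => rfl
    symm
    rw [div_eq_zero_iff]
    left
    have hP : (t/s) ^ ((x₂ - x₁)/2) ≠ 0 := by positivity
    have hQ : (t - s) ^ (-(x₁ + x₂)/2) ≠ 0 := by positivity
    rw [hps' t s hts hs, Real.rpow_sub_one hq.ne' ((x₂ - x₁)/2),
      Real.rpow_sub_one hts0.ne' (-(x₁ + x₂)/2)]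
    simp only [Pi.mul_apply]
    field_simp
    ring
  -- the quotient is globally constant on the region
  have key : ∀ t s : ℝ, s < t → 0 < s →
      R t s / ((t/s) ^ ((x₂ - x₁)/2) * (t - s) ^ (-(x₁ + x₂)/2)) =
      R 2 1 / ((2/1) ^ ((x₂ - x₁)/2) * (2 - 1) ^ (-(x₁ + x₂)/2)) := by
    intro t s hts hs
    set s' := min s 1 with hs'def
    have hs'0 : 0 < s' := lt_min hs one_pos
    have hs's : s' ≤ s := min_le_left s 1
    have hs'1 : s' ≤ 1 := min_le_right s 1
    have hs't : s' < t := hs's.trans_lt hts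
    have hs'2 : s' < 2 := hs'1.trans_lt one_lt_two
    have step1 : R t s / ((t/s) ^ ((x₂ - x₁)/2) * (t - s) ^ (-(x₁ + x₂)/2)) =
        R t s' / ((t/s') ^ ((x₂ - x₁)/2) * (t - s') ^ (-(x₁ + x₂)/2)) := by
      refine eq_of_deriv_zero (f := fun v => R t v / ((t/v) ^ ((x₂ - x₁)/2) * (t - v) ^ (-(x₁ + x₂)/2))) s s' fun x hx1 hx2 => ?_
      rw [min_eq_right hs's] at hx1
      rw [max_eq_left hs's] at hx2
      exact hGs t x (hx2.trans_lt hts) (hs'0.trans_le hx1)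
    have step2 : R t s' / ((t/s') ^ ((x₂ - x₁)/2) * (t - s') ^ (-(x₁ + x₂)/2)) =
        R 2 s' / ((2/s') ^ ((x₂ - x₁)/2) * (2 - s') ^ (-(x₁ + x₂)/2)) := by
      refine eq_of_deriv_zero (f := fun u => R u s' / ((u/s') ^ ((x₂ - x₁)/2) * (u - s') ^ (-(x₁ + x₂)/2))) t 2 fun x hx1 hx2 => ?_
      have hxs' : s' < x := lt_of_lt_of_le (lt_min hs't hs'2) hx1
      exact hGt x s' hxs' hs'0
    have step3 : R 2 s' / ((2/s') ^ ((x₂ - x₁)/2) * (2 - s') ^ (-(x₁ + x₂)/2)) =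
        R 2 1 / ((2/1) ^ ((x₂ - x₁)/2) * (2 - 1) ^ (-(x₁ + x₂)/2)) := by
      refine eq_of_deriv_zero (f := fun v => R 2 v / ((2/v) ^ ((x₂ - x₁)/2) * (2 - v) ^ (-(x₁ + x₂)/2))) s' 1 fun x hx1 hx2 => ?_
      rw [min_eq_left hs'1] at hx1
      rw [max_eq_right hs'1] at hx2
      exact hGs 2 x (hx2.trans_lt one_lt_two) (hs'0.trans_le hx1)
    exact (step1.trans step2).trans step3
  refine ⟨R 2 1 / ((2/1) ^ ((x₂ - x₁)/2) * (2 - 1) ^ (-(x₁ + x₂)/2)), fun t s hts hs => ?_⟩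
  have ht : (0:ℝ) < t := hs.trans hts
  have hts0 : (0:ℝ) < t - s := sub_pos.mpr hts
  have hNne : (t/s) ^ ((x₂ - x₁)/2) * (t - s) ^ (-(x₁ + x₂)/2) ≠ 0 := by positivity
  have hk := key t s hts hs
  rw [div_eq_iff hNne] at hk
  rw [mul_assoc]
  exact hk
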